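/- arXiv:2202.11940 — 6 statements merged into one kernel-verified Lean document; each statement's English description precedes it below -/
import Mathlib

section
/- Let V and V' be two multisets, each consisting of ℓ vectors in ℝⁿ. If occ_V(C,a) = occ_{V'}(C,a) for every subset C ⊆ [n] with |C| ≤ ⌊log₂ ℓ⌋ + 1 and every binary string a ∈ {0,1}^{|C|}, then the multisets of supports {supp(v) : v ∈ V} and {supp(v') : v' ∈ V'} are equal (as multisets of subsets of [n]). In other words, the values occ(C,a) over all sets C of size at most ⌊log₂ ℓ⌋ + 1 uniquely determine the supports of all ℓ vectors. -/
/-!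
Record each vector by its support pattern in `Bool ^ n`; then `occ U C a` counts the patterns in
the cylinder `{x | x = a on C}`. Let `s ≠ t` be two pattern multisets of the same size, pick
`x ∈ s - t`, `y ∈ t - s` and a coordinate `i` with `x i ≠ y i`. The slices `{z | z i = x i}` and
`{z | z i = y i}` of `s` and `t` still differ, and one of them carries at most half of the surplus
`card (s - t)`. Either the two parts of that slice already have different sizes (take `C = {i}`), or
we recurse into it. Each added coordinate halves the surplus, so some cylinder of dimension at most
`log₂ (card (s - t)) + 1 ≤ log₂ ℓ + 1` separates `s` from `t`.
-/

/-- `occ_U(C, a)`: the number of vectors `u` in the multiset `U` (with multiplicity)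
whose support indicator restricted to the coordinates in `C` equals the binary
string `a` (i.e. for each `i ∈ C`, `u i ≠ 0` exactly when the bit `a i` is `1`). -/
noncomputable def occ {n ℓ : ℕ} (U : Fin ℓ → Fin n → ℝ) (C : Finset (Fin n))
    (a : Fin n → Bool) : ℕ :=
  (Finset.univ.filter fun j : Fin ℓ => ∀ i ∈ C, (U j i ≠ 0 ↔ a i = true)).card

namespace Multiset

variable {α ι β : Type*}

lemma card_filter_add_card_filter_le (s : Multiset α) {p q : α → Prop} [DecidablePred p]
    [DecidablePred q] (h : ∀ x, p x → ¬q x) :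
    card (s.filter p) + card (s.filter q) ≤ card s := by
  have hpq : s.filter (fun x => p x ∧ q x) = 0 := filter_eq_nil.2 fun x _ hx => h x hx.1 hx.2
  rw [← card_add, filter_add_filter, hpq, add_zero]
  exact card_le_card (filter_le _ s)

lemma ne_of_mem_sub [DecidableEq α] {s t : Multiset α} {x : α} (hx : x ∈ s - t) : s ≠ t := by
  rintro rfl
  simp at hx

variable [DecidableEq β]

def cylinderCard (s : Multiset (ι → β)) (C : Finset ι) (a : ι → β) : ℕ :=
  card (s.filter fun x => ∀ j ∈ C, x j = a j)

@[simp]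
lemma cylinderCard_empty (s : Multiset (ι → β)) (a : ι → β) : cylinderCard s ∅ a = card s := by
  simp [cylinderCard]

lemma cylinderCard_filter_eq_zero (s : Multiset (ι → β)) {C : Finset ι} {a : ι → β} {i : ι}
    {b : β} (hi : i ∈ C) (hab : a i ≠ b) : cylinderCard (s.filter (· i = b)) C a = 0 := by
  rw [cylinderCard, card_eq_zero, filter_filter, filter_eq_nil]
  rintro x - ⟨hxa, hxb⟩
  exact hab (hxa i hi ▸ hxb)

lemma exists_slice_ne_of_card_eq [DecidableEq (ι → β)] {s t : Multiset (ι → β)}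
    (hcard : card s = card t) (hst : s ≠ t) : ∃ i b, s.filter (· i = b) ≠ t.filter (· i = b) ∧
      2 * card (s.filter (· i = b) - t.filter (· i = b)) ≤ card (s - t) := by
  have hts : t - s ≠ 0 :=
    mt tsub_eq_zero_iff_le.1 fun h => hst (eq_of_le_of_card_le h hcard.le).symm
  have hst' : s - t ≠ 0 := mt tsub_eq_zero_iff_le.1 fun h => hst (eq_of_le_of_card_le h hcard.ge)
  obtain ⟨x, hx⟩ := exists_mem_of_ne_zero hst'
  obtain ⟨y, hy⟩ := exists_mem_of_ne_zero hts
  have hxy : x ≠ y := by rintro rfl; rw [mem_sub] at hx hy; omega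
  obtain ⟨i, hi⟩ := Function.ne_iff.1 hxy
  have hx_slice : x ∈ s.filter (· i = x i) - t.filter (· i = x i) := by
    rw [← filter_sub]; exact mem_filter_of_mem hx rfl
  have hy_slice : y ∈ t.filter (· i = y i) - s.filter (· i = y i) := by
    rw [← filter_sub]; exact mem_filter_of_mem hy rfl
  have hsum := card_filter_add_card_filter_le (s - t) (p := (· i = x i)) (q := (· i = y i))
    fun z hzx hzy => hi (hzx ▸ hzy)
  rw [filter_sub, filter_sub] at hsum
  rcases le_total (card (s.filter (· i = x i) - t.filter (· i = x i)))
      (card (s.filter (· i = y i) - t.filter (· i = y i))) with hle | hle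
  · exact ⟨i, x i, ne_of_mem_sub hx_slice, by omega⟩
  · exact ⟨i, y i, (ne_of_mem_sub hy_slice).symm, by omega⟩

section Insert

variable [DecidableEq ι]

lemma cylinderCard_insert_update (s : Multiset (ι → β)) {C : Finset ι} {a : ι → β} {i : ι}
    {b : β} (h : i ∈ C → a i = b) :
    cylinderCard s (insert i C) (Function.update a i b) =
      cylinderCard (s.filter (· i = b)) C a := by
  rw [cylinderCard, cylinderCard, filter_filter]
  congr 2
  ext x
  simp only [Finset.forall_mem_insert, Function.update_self, and_comm (a := x i = b)]
  refine and_congr_left fun hxb => forall₂_congr fun j hj => ?_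
  rcases eq_or_ne j i with rfl | hji
  · rw [Function.update_self, hxb, h hj]
  · rw [Function.update_of_ne hji]

lemma cylinderCard_insert_update_ne {s t : Multiset (ι → β)} {C : Finset ι} {a : ι → β} {i : ι}
    {b : β} (h : cylinderCard (s.filter (· i = b)) C a ≠ cylinderCard (t.filter (· i = b)) C a) :
    cylinderCard s (insert i C) (Function.update a i b) ≠
      cylinderCard t (insert i C) (Function.update a i b) := by
  have hab : i ∈ C → a i = b := fun hi => by
    by_contra hab
    exact h (by rw [cylinderCard_filter_eq_zero s hi hab, cylinderCard_filter_eq_zero t hi hab])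
  rwa [cylinderCard_insert_update s hab, cylinderCard_insert_update t hab]

theorem exists_cylinderCard_ne_of_card_eq [DecidableEq (ι → β)] {s t : Multiset (ι → β)}
    (hcard : card s = card t) (hst : s ≠ t) :
    ∃ (C : Finset ι) (a : ι → β), C.card ≤ Nat.log 2 (card (s - t)) + 1 ∧
      cylinderCard s C a ≠ cylinderCard t C a := by
  induction hm : card (s - t) using Nat.strong_induction_on generalizing s t with
  | _ m ih =>
  obtain ⟨i, b, hslice, hhalf⟩ := exists_slice_ne_of_card_eq hcard hst
  obtain ⟨C, a, hC, hne⟩ : ∃ (C : Finset ι) (a : ι → β), C.card ≤ Nat.log 2 m ∧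
      cylinderCard (s.filter (· i = b)) C a ≠ cylinderCard (t.filter (· i = b)) C a := by
    by_cases hcard' : card (s.filter (· i = b)) = card (t.filter (· i = b))
    · have hpos : card (s.filter (· i = b) - t.filter (· i = b)) ≠ 0 := fun h0 =>
        hslice (eq_of_le_of_card_le (tsub_eq_zero_iff_le.1 (card_eq_zero.1 h0)) hcard'.ge)
      obtain ⟨C, a, hC, hne⟩ := ih _ (by omega) hcard' hslice rfl
      refine ⟨C, a, hC.trans ?_, hne⟩
      rw [← Nat.log_mul_base one_lt_two hpos]
      exact Nat.log_mono_right (by omega)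
    · exact ⟨∅, fun _ => b, by simp, by simpa using hcard'⟩
  exact ⟨insert i C, Function.update a i b, (Finset.card_insert_le _ _).trans (by omega),
    cylinderCard_insert_update_ne hne⟩

end Insert

theorem eq_of_forall_cylinderCard_eq {s t : Multiset (ι → β)}
    (h : ∀ C : Finset ι, C.card ≤ Nat.log 2 (card s) + 1 → ∀ a : ι → β,
      cylinderCard s C a = cylinderCard t C a) : s = t := by
  classical
  by_contra hst
  have hcard : card s = card t := by
    obtain ⟨a⟩ : Nonempty (ι → β) := by
      by_contra hι
      rw [not_nonempty_iff] at hι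
      exact hst (Subsingleton.elim s t)
    simpa using h ∅ (by simp) a
  obtain ⟨C, a, hC, hne⟩ := exists_cylinderCard_ne_of_card_eq hcard hst
  exact hne (h C (hC.trans (by gcongr; exact tsub_le_self)) a)

end Multiset

noncomputable def supportPatterns {n ℓ : ℕ} (U : Fin ℓ → Fin n → ℝ) : Multiset (Fin n → Bool) :=
  Finset.univ.val.map fun j i => decide (U j i ≠ 0)

lemma card_supportPatterns {n ℓ : ℕ} (U : Fin ℓ → Fin n → ℝ) :
    Multiset.card (supportPatterns U) = ℓ := by
  simp [supportPatterns]

lemma occ_eq_cylinderCard {n ℓ : ℕ} (U : Fin ℓ → Fin n → ℝ) (C : Finset (Fin n))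
    (a : Fin n → Bool) : occ U C a = (supportPatterns U).cylinderCard C a := by
  simp only [occ, Multiset.cylinderCard, supportPatterns, Multiset.filter_map, Multiset.card_map]
  rw [Finset.card_def, Finset.filter_val]
  congr! 2 with j
  simp only [Function.comp_apply]
  refine forall₂_congr fun i _ => ?_
  cases a i <;> simp

lemma map_supports_eq {n ℓ : ℕ} (U : Fin ℓ → Fin n → ℝ) :
    Multiset.map (fun j : Fin ℓ => Finset.univ.filter fun i => U j i ≠ 0)
        (Finset.univ : Finset (Fin ℓ)).val =
      (supportPatterns U).map fun x => Finset.univ.filter fun i => x i = true := by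
  simp [supportPatterns, Function.comp_def]

/-- If two multisets `U, U'` of `ℓ` vectors in `ℝⁿ` have the same values
`occ(C, a)` for every subset `C ⊆ [n]` with `|C| ≤ ⌊log₂ ℓ⌋ + 1` and every binary
string `a`, then the multisets of supports of `U` and `U'` coincide. -/
theorem occ_determines_supports (n ℓ : ℕ) (U U' : Fin ℓ → Fin n → ℝ)
    (h : ∀ C : Finset (Fin n), C.card ≤ Nat.log 2 ℓ + 1 →
      ∀ a : Fin n → Bool, occ U C a = occ U' C a) :
    Multiset.map (fun j : Fin ℓ => Finset.univ.filter fun i => U j i ≠ 0)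
        (Finset.univ : Finset (Fin ℓ)).val =
      Multiset.map (fun j : Fin ℓ => Finset.univ.filter fun i => U' j i ≠ 0)
        (Finset.univ : Finset (Fin ℓ)).val := by
  have hpatterns : supportPatterns U = supportPatterns U' :=
    Multiset.eq_of_forall_cylinderCard_eq fun C hC a => by
      rw [← occ_eq_cylinderCard, ← occ_eq_cylinderCard]
      exact h C (card_supportPatterns U ▸ hC) a
  rw [map_supports_eq, map_supports_eq, hpatterns]
end

section
/- Let U and U' be two multisets, each consisting of ℓ vectors in ℝⁿ, and let t ≥ 1. If |∪_{i∈C} S_U(i)| = |∪_{i∈C} S_{U'}(i)| for every subset C ⊆ [n] with |C| ≤ t, then occ_U(C,a) = occ_{U'}(C,a) for every subset C ⊆ [n] with |C| ≤ t and every binary string a ∈ {0,1}^{|C|}. That is, the union cardinalities |∪_{i∈C} S(i)| over all sets C of size at most t uniquely determine all the values occ(C,a) for sets C of size at most t. -/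
/-- `|∪_{i ∈ C} S_U(i)|`: the number of vectors in `U` (with multiplicity) having a
non-zero entry in at least one coordinate of `C`. -/
noncomputable def unionCount {n ℓ : ℕ} (U : Fin ℓ → Fin n → ℝ) (C : Finset (Fin n)) : ℕ :=
  (Finset.univ.filter fun j : Fin ℓ => ∃ i ∈ C, U j i ≠ 0).card

open Classical in
/-- Base case: if `a` is false on all of `C`, then `occ` is determined by `unionCount`. -/
lemma occ_all_false {n ℓ : ℕ} (U : Fin ℓ → Fin n → ℝ) (C : Finset (Fin n))
    (a : Fin n → Bool) (hall : ∀ i ∈ C, a i = false) :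
    occ U C a + unionCount U C = ℓ := by
  unfold occ unionCount
  have hcongr : (Finset.univ.filter fun j : Fin ℓ => ∀ i ∈ C, (U j i ≠ 0 ↔ a i = true))
      = (Finset.univ.filter fun j : Fin ℓ => ¬ ∃ i ∈ C, U j i ≠ 0) := by
    apply Finset.filter_congr
    intro j _
    push_neg
    constructor
    · intro hj i hi
      by_contra hne
      have := (hj i hi).1 hne
      rw [hall i hi] at this
      exact Bool.false_ne_true this
    · intro hj i hi
      rw [hall i hi]
      simp [hj i hi]
  rw [hcongr]
  have := Finset.card_filter_add_card_filter_not
    (s := (Finset.univ : Finset (Fin ℓ))) (p := fun j => ∃ i ∈ C, U j i ≠ 0)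
  simpa [Nat.add_comm] using this

open Classical in
/-- Splitting lemma: erasing a coordinate `i` with `a i = true` from `C` splits `occ`. -/
lemma occ_erase_split {n ℓ : ℕ} (U : Fin ℓ → Fin n → ℝ) (C : Finset (Fin n))
    (a : Fin n → Bool) (i : Fin n) (hi : i ∈ C) (hai : a i = true) :
    occ U (C.erase i) a = occ U C a + occ U C (Function.update a i false) := by
  classical
  unfold occ
  have h1 : (Finset.univ.filter fun j : Fin ℓ => ∀ k ∈ C, (U j k ≠ 0 ↔ a k = true))
      = (Finset.univ.filter fun j : Fin ℓ => ∀ k ∈ C.erase i, (U j k ≠ 0 ↔ a k = true)).filter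
          (fun j => U j i ≠ 0) := by
    rw [Finset.filter_filter]
    apply Finset.filter_congr
    intro j _
    constructor
    · intro hj
      refine ⟨fun k hk => hj k (Finset.mem_of_mem_erase hk), ?_⟩
      exact (hj i hi).2 hai
    · rintro ⟨hj, hji⟩ k hk
      rcases eq_or_ne k i with rfl | hne
      · simp [hji, hai]
      · exact hj k (Finset.mem_erase.2 ⟨hne, hk⟩)
  have h2 : (Finset.univ.filter fun j : Fin ℓ =>
        ∀ k ∈ C, (U j k ≠ 0 ↔ Function.update a i false k = true))
      = (Finset.univ.filter fun j : Fin ℓ => ∀ k ∈ C.erase i, (U j k ≠ 0 ↔ a k = true)).filter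
          (fun j => ¬ U j i ≠ 0) := by
    rw [Finset.filter_filter]
    apply Finset.filter_congr
    intro j _
    constructor
    · intro hj
      constructor
      · intro k hk
        have hne : k ≠ i := (Finset.mem_erase.1 hk).1
        have := hj k (Finset.mem_of_mem_erase hk)
        rwa [Function.update_of_ne hne] at this
      · intro hji
        have := (hj i hi).1 hji
        rw [Function.update_self] at this
        exact Bool.false_ne_true this
    · rintro ⟨hj, hji⟩ k hk
      rcases eq_or_ne k i with rfl | hne
      · rw [Function.update_self]
        simp only [not_not] at hji
        simp [hji]
      · rw [Function.update_of_ne hne]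
        exact hj k (Finset.mem_erase.2 ⟨hne, hk⟩)
  rw [h1, h2]
  exact (Finset.card_filter_add_card_filter_not (p := fun j => U j i ≠ 0)).symm

/-- The union cardinalities `|∪_{i∈C} S(i)|` over all sets `C` with `|C| ≤ t`
uniquely determine all values `occ(C, a)` for sets `C` with `|C| ≤ t`. -/
theorem unionCounts_determine_occ (n ℓ t : ℕ) (ht : 1 ≤ t)
    (U U' : Fin ℓ → Fin n → ℝ)
    (h : ∀ C : Finset (Fin n), C.card ≤ t → unionCount U C = unionCount U' C) :
    ∀ C : Finset (Fin n), C.card ≤ t → ∀ a : Fin n → Bool,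
      occ U C a = occ U' C a := by
  classical
  suffices H : ∀ m : ℕ, ∀ C : Finset (Fin n), ∀ a : Fin n → Bool,
      (C.filter fun i => a i = true).card ≤ m → C.card ≤ t → occ U C a = occ U' C a by
    intro C hC a
    exact H _ C a le_rfl hC
  intro m
  induction m with
  | zero =>
    intro C a ha hC
    have hall : ∀ i ∈ C, a i = false := by
      intro i hi
      by_contra hne
      have hai : a i = true := by
        cases hb : a i
        · exact absurd hb hne
        · rfl
      have hmem : i ∈ C.filter fun i => a i = true := Finset.mem_filter.2 ⟨hi, hai⟩
      have := Finset.card_pos.2 ⟨i, hmem⟩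
      omega
    have e1 := occ_all_false U C a hall
    have e2 := occ_all_false U' C a hall
    have e3 := h C hC
    omega
  | succ m ih =>
    intro C a ha hC
    by_cases hle : (C.filter fun i => a i = true).card ≤ m
    · exact ih C a hle hC
    · have hpos : 0 < (C.filter fun i => a i = true).card := by omega
      obtain ⟨i, hi⟩ := Finset.card_pos.1 hpos
      obtain ⟨hiC, hai⟩ := Finset.mem_filter.1 hi
      have hsplit := occ_erase_split U C a i hiC hai
      have hsplit' := occ_erase_split U' C a i hiC hai
      -- IH applied to erased set
      have hfe : (C.erase i).filter (fun k => a k = true)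
          = ((C.filter fun k => a k = true).erase i) := by
        ext k
        simp only [Finset.mem_filter, Finset.mem_erase]
        tauto
      have h1 : occ U (C.erase i) a = occ U' (C.erase i) a := by
        apply ih
        · rw [hfe]
          have := Finset.card_erase_of_mem hi
          omega
        · exact le_trans (Finset.card_le_card (Finset.erase_subset _ _)) hC
      -- IH applied to updated a
      have hfa' : (C.filter fun k => Function.update a i false k = true)
          = ((C.filter fun k => a k = true).erase i) := by
        ext k
        simp only [Finset.mem_filter, Finset.mem_erase]
        constructor
        · rintro ⟨hk, hk'⟩
          rcases eq_or_ne k i with rfl | hne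
          · rw [Function.update_self] at hk'
            exact absurd hk' Bool.false_ne_true
          · rw [Function.update_of_ne hne] at hk'
            exact ⟨hne, hk, hk'⟩
        · rintro ⟨hne, hk, hk'⟩
          rw [Function.update_of_ne hne]
          exact ⟨hk, hk'⟩
      have h2 : occ U C (Function.update a i false) = occ U' C (Function.update a i false) := by
        apply ih
        · rw [hfa']
          have := Finset.card_erase_of_mem hi
          omega
        · exact hC
      omega
end

section
/- Let s ≤ ℓ−1, and let V and V' be multisets of ℓ vectors in ℝⁿ such that Maximal(V) and Maximal(V') are both s-good and |Maximal(V)| ≥ 2 and |Maximal(V')| ≥ 2. If for every subset C ⊆ [n] with |C| ≤ s+1 it holds that |∩_{i∈C} S_V(i)| > 0 if and only if |∩_{i∈C} S_{V'}(i)| > 0, then Maximal(V) = Maximal(V'). That is, under the s-goodness assumption, knowing for every set C of size at most s+1 whether some vector is non-zero on all of C uniquely determines the maximal supports. -/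
/-- The support of a vector `u ∈ ℝⁿ`. -/
noncomputable def suppVec {n : ℕ} (u : Fin n → ℝ) : Finset (Fin n) :=
  Finset.univ.filter fun i => u i ≠ 0

/-- `Maximal(V)`: the maximal elements, under set inclusion, of the family of
supports of the vectors of the multiset `V`. -/
noncomputable def maximalSupports {n ℓ : ℕ} (V : Fin ℓ → Fin n → ℝ) :
    Finset (Finset (Fin n)) :=
  (Finset.univ.image fun j => suppVec (V j)).filter
    fun A => ∀ B ∈ (Finset.univ.image fun j => suppVec (V j)), A ⊆ B → A = B

/-- A family `F` of (distinct) subsets of `[n]` is `t`-good if every member `A`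
has a subset `S ⊆ A` with `|S| ≤ t` not contained in any other member of `F`. -/
def tGood {n : ℕ} (t : ℕ) (F : Finset (Finset (Fin n))) : Prop :=
  ∀ A ∈ F, ∃ S ⊆ A, S.card ≤ t ∧ ∀ A' ∈ F, A' ≠ A → ¬ S ⊆ A'

/-- `|∩_{i ∈ C} S_V(i)|`: the number of vectors in `V` (with multiplicity) having a
non-zero entry in every coordinate of `C`. -/
noncomputable def interCount {n ℓ : ℕ} (V : Fin ℓ → Fin n → ℝ) (C : Finset (Fin n)) : ℕ :=
  (Finset.univ.filter fun j : Fin ℓ => ∀ i ∈ C, V j i ≠ 0).card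


/-- Every support is contained in some maximal support. -/
lemma exists_maximal_superset {n ℓ : ℕ} (V : Fin ℓ → Fin n → ℝ) (j : Fin ℓ) :
    ∃ A ∈ maximalSupports V, suppVec (V j) ⊆ A := by
  set F := Finset.univ.image fun j => suppVec (V j) with hF
  set G := F.filter (fun B => suppVec (V j) ⊆ B) with hG
  have hGne : G.Nonempty := ⟨suppVec (V j), by simp [hG, hF]⟩
  obtain ⟨B, hBG, hBmax⟩ := G.exists_max_image Finset.card hGne
  rw [hG, Finset.mem_filter] at hBG
  refine ⟨B, ?_, hBG.2⟩
  rw [maximalSupports, Finset.mem_filter]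
  refine ⟨hBG.1, fun B' hB' hBB' => ?_⟩
  have hB'G : B' ∈ G := by
    rw [hG, Finset.mem_filter]; exact ⟨hB', hBG.2.trans hBB'⟩
  exact Finset.eq_of_subset_of_card_le hBB' (hBmax B' hB'G)

/-- `interCount V C` is positive iff `C` is contained in some maximal support. -/
lemma interCount_pos_iff {n ℓ : ℕ} (V : Fin ℓ → Fin n → ℝ) (C : Finset (Fin n)) :
    0 < interCount V C ↔ ∃ A ∈ maximalSupports V, C ⊆ A := by
  rw [interCount, Finset.card_pos]
  constructor
  · rintro ⟨j, hj⟩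
    rw [Finset.mem_filter] at hj
    obtain ⟨A, hA, hsub⟩ := exists_maximal_superset V j
    refine ⟨A, hA, fun i hi => hsub ?_⟩
    simp only [suppVec, Finset.mem_filter, Finset.mem_univ, true_and]
    exact hj.2 i hi
  · rintro ⟨A, hA, hCA⟩
    rw [maximalSupports, Finset.mem_filter, Finset.mem_image] at hA
    obtain ⟨⟨j, _, hj⟩, _⟩ := hA
    refine ⟨j, ?_⟩
    rw [Finset.mem_filter]
    refine ⟨Finset.mem_univ _, fun i hi => ?_⟩
    have : i ∈ suppVec (V j) := hj ▸ hCA hi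
    simpa [suppVec] using this

/-- One inclusion of the recovery theorem. -/
lemma maximal_subset_of_tGood {n ℓ s : ℕ} {V V' : Fin ℓ → Fin n → ℝ}
    (hgood : tGood s (maximalSupports V)) (hgood' : tGood s (maximalSupports V'))
    (h : ∀ C : Finset (Fin n), C.card ≤ s + 1 →
      (0 < interCount V C ↔ 0 < interCount V' C)) :
    maximalSupports V ⊆ maximalSupports V' := by
  intro A hA
  obtain ⟨S, hSA, hScard, hSuniq⟩ := hgood A hA
  have hSposV : 0 < interCount V S := (interCount_pos_iff V S).2 ⟨A, hA, hSA⟩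
  have hSposV' : 0 < interCount V' S := (h S (hScard.trans (Nat.le_succ s))).1 hSposV
  obtain ⟨B, hB, hSB⟩ := (interCount_pos_iff V' S).1 hSposV'
  have hBA : B ⊆ A := by
    intro i hi
    have hcard1 : (insert i S).card ≤ s + 1 :=
      (Finset.card_insert_le i S).trans (Nat.succ_le_succ hScard)
    have hpos' : 0 < interCount V' (insert i S) :=
      (interCount_pos_iff V' _).2 ⟨B, hB, Finset.insert_subset hi hSB⟩
    have hpos : 0 < interCount V (insert i S) := (h _ hcard1).2 hpos'
    obtain ⟨D, hD, hDsub⟩ := (interCount_pos_iff V _).1 hpos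
    have hDA : D = A := by
      by_contra hne
      exact hSuniq D hD hne ((Finset.subset_insert i S).trans hDsub)
    exact hDA ▸ hDsub (Finset.mem_insert_self i S)
  obtain ⟨S', hS'B, hS'card, hS'uniq⟩ := hgood' B hB
  have hS'posV' : 0 < interCount V' S' := (interCount_pos_iff V' S').2 ⟨B, hB, hS'B⟩
  have hS'posV : 0 < interCount V S' := (h S' (hS'card.trans (Nat.le_succ s))).2 hS'posV'
  obtain ⟨C, hC, hS'C⟩ := (interCount_pos_iff V S').1 hS'posV
  have hCB : C ⊆ B := by
    intro i hi
    have hcard1 : (insert i S').card ≤ s + 1 :=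
      (Finset.card_insert_le i S').trans (Nat.succ_le_succ hS'card)
    have hpos : 0 < interCount V (insert i S') :=
      (interCount_pos_iff V _).2 ⟨C, hC, Finset.insert_subset hi hS'C⟩
    have hpos' : 0 < interCount V' (insert i S') := (h _ hcard1).1 hpos
    obtain ⟨D, hD, hDsub⟩ := (interCount_pos_iff V' _).1 hpos'
    have hDB : D = B := by
      by_contra hne
      exact hS'uniq D hD hne ((Finset.subset_insert i S').trans hDsub)
    exact hDB ▸ hDsub (Finset.mem_insert_self i S')
  have hCmem := hC
  rw [maximalSupports, Finset.mem_filter] at hCmem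
  have hAimg : A ∈ Finset.univ.image fun j => suppVec (V j) := by
    rw [maximalSupports, Finset.mem_filter] at hA; exact hA.1
  have hCA : C = A := hCmem.2 A hAimg (hCB.trans hBA)
  have : A = B := le_antisymm (hCA ▸ hCB) hBA
  exact this ▸ hB

/-- If `Maximal(V)` and `Maximal(V')` are `s`-good with at least two elements each,
then knowing for every set `C` with `|C| ≤ s+1` whether some vector is non-zero on
all of `C` determines the maximal supports: if those indicators agree for `V` and
`V'`, then `Maximal(V) = Maximal(V')`. -/
theorem maximal_support_recovery_s_good (n ℓ s : ℕ) (hs : s ≤ ℓ - 1)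
    (V V' : Fin ℓ → Fin n → ℝ)
    (hgood : tGood s (maximalSupports V)) (hgood' : tGood s (maximalSupports V'))
    (hcard : 2 ≤ (maximalSupports V).card) (hcard' : 2 ≤ (maximalSupports V').card)
    (h : ∀ C : Finset (Fin n), C.card ≤ s + 1 →
      (0 < interCount V C ↔ 0 < interCount V' C)) :
    maximalSupports V = maximalSupports V' := by
  apply Finset.Subset.antisymm
  · exact maximal_subset_of_tGood hgood hgood' h
  · exact maximal_subset_of_tGood hgood' hgood (fun C hC => (h C hC).symm)
end

section
/- Let P(θ), θ ∈ ℝ, be a family of probability distributions on ℝ whose t-th moment is, for every relevant t, a polynomial of degree exactly t in θ: E_{x∼P(θ)}[xᵗ] = Σ_{i=1}^{t+1} β_{t,i} θ^{i−1} with β_{t,t+1} ≠ 0, and with all required absolute moments finite. Let V = {v^{(1)},…,v^{(ℓ)}} and V' = {w^{(1)},…,w^{(ℓ)}} be multisets of ℓ vectors in ℝⁿ, each generating a mixture as follows: choose j uniformly from [ℓ] and draw the coordinates of x independently with x_i ∼ P(v^{(j)}_i) (respectively x_i ∼ P(w^{(j)}_i)). Fix a subset C ⊆ [n] and a tuple t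 = (t_i)_{i∈C} of non-negative integers. If the mixture moments E[∏_{i∈C} x_i^{u_i}] agree for the two mixtures for every tuple u with u_i ≤ t_i for all i ∈ C, then Σ_{j=1}^{ℓ} ∏_{i∈C} (v^{(j)}_i)^{u_i} = Σ_{j=1}^{ℓ} ∏_{i∈C} (w^{(j)}_i)^{u_i} for every such tuple u. -/
/-! The mixture moment of the monomial `∏_{i ∈ C} x_i ^ u_i` is `ℓ⁻¹ ∑_j ∏_{i ∈ C} m_{u_i}(v⁽ʲ⁾_i)`,
where `m_k(θ)` is the `k`-th moment of `P(θ)`. Since `m_k` is a polynomial of degree exactly `k`,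
the functions `θ ↦ θ ^ k`, `k ≤ t`, lie in the span of `m_0, …, m_t`, so every monomial
`∏_{i ∈ C} x_i ^ u_i` lies in the span of the products `∏_{i ∈ C} m_{u_i}(x_i)`. The linear
functional `g ↦ ∑_j g(v⁽ʲ⁾) - ∑_j g(w⁽ʲ⁾)` vanishes on those products by hypothesis, hence on the
monomials. -/

open MeasureTheory
open scoped Pointwise

theorem mem_span_image_Iic_of_triangular {K M : Type*} [Field K] [AddCommGroup M] [Module K M]
    (e q : ℕ → M) (β : ℕ → ℕ → K) (hβ : ∀ t, β t t ≠ 0)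
    (hq : ∀ t, q t = ∑ k ∈ Finset.range (t + 1), β t k • e k) (t : ℕ) :
    e t ∈ Submodule.span K (q '' Set.Iic t) := by
  induction t using Nat.strong_induction_on with
  | _ t ih =>
    have hlower : ∀ k ∈ Finset.range t, β t k • e k ∈ Submodule.span K (q '' Set.Iic t) :=
      fun k hk => Submodule.smul_mem _ _ <| Submodule.span_mono
        (Set.image_mono (Set.Iic_subset_Iic.2 (Finset.mem_range.1 hk).le))
        (ih k (Finset.mem_range.1 hk))
    have hqt : q t ∈ Submodule.span K (q '' Set.Iic t) :=
      Submodule.subset_span ⟨t, Set.mem_Iic.2 le_rfl, rfl⟩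
    have heq : e t = (β t t)⁻¹ • (q t - ∑ k ∈ Finset.range t, β t k • e k) := by
      rw [hq, Finset.sum_range_succ, add_sub_cancel_left, inv_smul_smul₀ (hβ t)]
    rw [heq]
    exact Submodule.smul_mem _ _ (sub_mem hqt (Submodule.sum_mem _ hlower))

theorem Submodule.prod_mem_span_finsetProd {R A ι : Type*} [CommSemiring R] [CommSemiring A]
    [Algebra R A] {s : Finset ι} {S : ι → Set A} {x : ι → A}
    (hx : ∀ i ∈ s, x i ∈ span R (S i)) : ∏ i ∈ s, x i ∈ span R (∏ i ∈ s, S i) := by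
  rw [← span_singleton_le_iff_mem, ← prod_span, ← Set.finsetProd_singleton, ← prod_span]
  exact Finset.prod_le_prod' fun i hi => (span_singleton_le_iff_mem _ _).2 (hx i hi)

def sumEvalSub (R : Type*) {X κ : Type*} [CommRing R] [Fintype κ] (v w : κ → X) :
    (X → R) →ₗ[R] R :=
  ∑ j, LinearMap.proj (v j) - ∑ j, LinearMap.proj (w j)

theorem mem_ker_sumEvalSub {R X κ : Type*} [CommRing R] [Fintype κ] {v w : κ → X} {g : X → R} :
    g ∈ LinearMap.ker (sumEvalSub R v w) ↔ ∑ j, g (v j) = ∑ j, g (w j) := by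
  simp [sumEvalSub, sub_eq_zero]

theorem sum_prod_pow_eq_of_sum_prod_eq_of_triangular {K ι κ : Type*} [Field K] [Fintype κ]
    (m : ℕ → K → K) (β : ℕ → ℕ → K) (hβ : ∀ t, β t t ≠ 0)
    (hm : ∀ t θ, m t θ = ∑ k ∈ Finset.range (t + 1), β t k * θ ^ k)
    (v w : κ → ι → K) (C : Finset ι) (t : ι → ℕ)
    (h : ∀ u : ι → ℕ, (∀ i ∈ C, u i ≤ t i) →
      ∑ j, ∏ i ∈ C, m (u i) (v j i) = ∑ j, ∏ i ∈ C, m (u i) (w j i))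
    (u : ι → ℕ) (hu : ∀ i ∈ C, u i ≤ t i) :
    ∑ j, ∏ i ∈ C, v j i ^ u i = ∑ j, ∏ i ∈ C, w j i ^ u i := by
  let S (i : ι) : Set ((ι → K) → K) := (fun k x => m k (x i)) '' Set.Iic (t i)
  have hspan : Submodule.span K (∏ i ∈ C, S i) ≤ LinearMap.ker (sumEvalSub K v w) := by
    refine Submodule.span_le.2 fun g hg => ?_
    obtain ⟨f, hf, rfl⟩ := (Set.mem_finsetProd _ _ _).1 hg
    -- `∃ k` before `i ∈ C`, so that `choose` yields a total exponent function `k : ι → ℕ`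
    have hexp : ∀ i, ∃ k, i ∈ C → k ≤ t i ∧ f i = fun x => m k (x i) := by
      intro i
      by_cases hi : i ∈ C
      · obtain ⟨k, hk, hfk⟩ := hf hi
        exact ⟨k, fun _ => ⟨hk, hfk.symm⟩⟩
      · exact ⟨0, fun h => (hi h).elim⟩
    choose k hk using hexp
    rw [Finset.prod_congr rfl fun i hi => (hk i hi).2, SetLike.mem_coe, mem_ker_sumEvalSub]
    simpa only [Finset.prod_apply] using h k fun i hi => (hk i hi).1
  have hmonomial (i : ι) (hi : i ∈ C) : (fun x : ι → K => x i ^ u i) ∈ Submodule.span K (S i) := by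
    refine Submodule.span_mono (Set.image_mono (Set.Iic_subset_Iic.2 (hu i hi)))
      (mem_span_image_Iic_of_triangular (fun k (x : ι → K) => x i ^ k) _ β hβ (fun t => ?_) (u i))
    ext x
    simp [hm, Finset.sum_apply]
  simpa only [mem_ker_sumEvalSub, Finset.prod_apply] using
    hspan (Submodule.prod_mem_span_finsetProd hmonomial)

theorem Finset.prod_eval_eq_prod_univ_ite {ι E R : Type*} [Fintype ι] [DecidableEq ι]
    [CommMonoid R] (s : Finset ι) (f : ι → E → R) :
    (fun x : ι → E => ∏ i ∈ s, f i (x i)) = fun x => ∏ i, (if i ∈ s then f i else 1) (x i) := by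
  simp only [ite_apply, Pi.one_apply, Finset.prod_ite_mem, Finset.univ_inter]

section ProductMeasure

variable {ι E 𝕜 : Type*} [Fintype ι] [MeasurableSpace E] [RCLike 𝕜] (μ : ι → Measure E)
  [∀ i, IsProbabilityMeasure (μ i)] {f : ι → E → 𝕜} {s : Finset ι}

theorem integral_finset_prod_pi :
    ∫ x, ∏ i ∈ s, f i (x i) ∂Measure.pi μ = ∏ i ∈ s, ∫ y, f i y ∂μ i := by
  classical
  rw [Finset.prod_eval_eq_prod_univ_ite, integral_fintype_prod_eq_prod,
    ← Finset.prod_subset s.subset_univ fun i _ hi => by simp [hi]]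
  exact Finset.prod_congr rfl fun i hi => by simp [hi]

theorem integrable_finset_prod_pi (hf : ∀ i ∈ s, Integrable (f i) (μ i)) :
    Integrable (fun x => ∏ i ∈ s, f i (x i)) (Measure.pi μ) := by
  classical
  rw [Finset.prod_eval_eq_prod_univ_ite]
  refine Integrable.fintype_prod fun i => ?_
  split_ifs with hi
  · exact hf i hi
  · exact integrable_const 1

end ProductMeasure

/-- Suppose `P(θ)` has, for each `t`, `t`-th moment equal to a polynomial of
degree exactly `t` in `θ`: `E_{x∼P(θ)}[x^t] = Σ_{i=0}^{t} β t i • θ^i` with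
leading coefficient `β t t ≠ 0`, and all moments finite.  If the mixture
moments `E[∏_{i∈C} x_i^{u_i}]` of the two uniform mixtures of products
generated by the multisets `V = {v⁽ʲ⁾}` and `V' = {w⁽ʲ⁾}` agree for every tuple
`u` with `u_i ≤ t_i` on `C`, then the power sums
`Σ_j ∏_{i∈C} (v⁽ʲ⁾_i)^{u_i}` and `Σ_j ∏_{i∈C} (w⁽ʲ⁾_i)^{u_i}` agree for every
such tuple `u`. -/
theorem mixture_moments_determine_power_sums (n ℓ : ℕ) (P : ℝ → Measure ℝ)
    [∀ θ, IsProbabilityMeasure (P θ)]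
    (β : ℕ → ℕ → ℝ) (htop : ∀ t, β t t ≠ 0)
    (hint : ∀ θ t, Integrable (fun x : ℝ => x ^ t) (P θ))
    (hmom : ∀ θ t, (∫ x, x ^ t ∂(P θ)) = ∑ i ∈ Finset.range (t + 1), β t i * θ ^ i)
    (v w : Fin ℓ → Fin n → ℝ) (C : Finset (Fin n)) (t : Fin n → ℕ)
    (h : ∀ u : Fin n → ℕ, (∀ i ∈ C, u i ≤ t i) →
      (∫ x : Fin n → ℝ, ∏ i ∈ C, (x i) ^ (u i)
          ∂((ℓ : ENNReal)⁻¹ • ∑ j : Fin ℓ, Measure.pi fun i => P (v j i)))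
        = ∫ x : Fin n → ℝ, ∏ i ∈ C, (x i) ^ (u i)
          ∂((ℓ : ENNReal)⁻¹ • ∑ j : Fin ℓ, Measure.pi fun i => P (w j i))) :
    ∀ u : Fin n → ℕ, (∀ i ∈ C, u i ≤ t i) →
      (∑ j : Fin ℓ, ∏ i ∈ C, (v j i) ^ (u i))
        = ∑ j : Fin ℓ, ∏ i ∈ C, (w j i) ^ (u i) := by
  rcases Nat.eq_zero_or_pos ℓ with rfl | hℓ
  · simp
  refine sum_prod_pow_eq_of_sum_prod_eq_of_triangular (fun k θ => ∫ x, x ^ k ∂P θ) β htop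
    (fun k θ => hmom θ k) v w C t fun u hu => ?_
  have hmix := h u hu
  have hint_pi (z : Fin ℓ → Fin n → ℝ) (j : Fin ℓ) :
      Integrable (fun x : Fin n → ℝ => ∏ i ∈ C, x i ^ u i) (Measure.pi fun i => P (z j i)) :=
    integrable_finset_prod_pi _ fun i _ => hint _ _
  rw [integral_smul_measure, integral_smul_measure,
    integral_finsetSum_measure fun j _ => hint_pi v j,
    integral_finsetSum_measure fun j _ => hint_pi w j] at hmix
  simp only [integral_finset_prod_pi _ (f := fun i (y : ℝ) => y ^ u i)] at hmix
  refine mul_left_cancel₀ ?_ hmix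
  simpa using hℓ.ne'
end

section
/- Let v ∈ ℝⁿ have non-negative entries, with every non-zero entry of magnitude at least δ > 0 and ‖v‖₂ ≤ R, and suppose v_i ≠ 0 for some i ∈ C where C ⊆ [n]. Let σ ≥ 0 with R² + σ² > 0, let a > 0, let x₁,…,xₙ be i.i.d. standard Gaussian N(0,1), and let z ∼ N(0,σ²) be independent of x. Then the conditional probability that ⟨v,x⟩ + z ≥ 0 given the event E_C = {x_j > a for all j ∈ C} is at least Φ(aδ/√(R²+σ²)), where Φ denotes the standard Gaussian cumulative distribution function; equivalently, it is at least ½ + ½·erf(aδ/√(2(R²+σ²))). -/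
/-!
Split `x` into its coordinates in `C` and the rest. On `E_C` every `x_j` with `j ∈ C` exceeds
`a > 0`, so `∑_{j ∈ C} v_j x_j ≥ a v_i ≥ a δ`. The remainder `W = ∑_{j ∉ C} v_j x_j + z` is
independent of `x_C` and is `N(0, τ)` with `τ ≤ R² + σ²`. Hence
`P(⟨v, x⟩ + z ≥ 0 | E_C) ≥ P(W ≥ -a δ) = Φ(a δ / √τ) ≥ Φ(a δ / √(R² + σ²))`.
-/

open MeasureTheory ProbabilityTheory Set
open scoped NNReal

lemma gaussianReal_pi_map_sum_mul {ι : Type*} [Fintype ι] (c : ι → ℝ) :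
    (Measure.pi fun _ : ι => gaussianReal 0 1).map (fun x => ∑ i, c i * x i) =
      gaussianReal 0 (∑ i, c i ^ 2).toNNReal := by
  have hcomp : (fun x : ι → ℝ => ∑ i, c i * x i) =
      (fun y : ι → ℝ => ∑ i, y i) ∘ fun x i => c i * x i := rfl
  rw [hcomp, ← Measure.map_map (by fun_prop) (by fun_prop),
    Measure.pi_map_pi fun _ => by fun_prop]
  simp only [gaussianReal_map_const_mul, mul_zero, mul_one]
  refine Measure.ext_of_charFun (funext fun t => ?_)
  rw [charFun_map_sum_pi_eq_prod, Finset.prod_apply]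
  simp only [charFun_gaussianReal, ← Complex.exp_sum]
  congr 1
  rw [Real.coe_toNNReal _ (by positivity)]
  push_cast
  rw [Finset.sum_mul, Finset.sum_div]
  simp

lemma map_prod_add_eq_conv {α β : Type*} [MeasurableSpace α] [MeasurableSpace β]
    {μ : Measure α} {ν : Measure β} [SFinite μ] [SFinite ν] {X : α → ℝ} {Y : β → ℝ}
    (hX : Measurable X) (hY : Measurable Y) :
    (μ.prod ν).map (fun p => X p.1 + Y p.2) = μ.map X ∗ ν.map Y := by
  rw [Measure.conv, Measure.map_prod_map _ _ hX hY, Measure.map_map (by fun_prop) (by fun_prop)]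
  rfl

lemma gaussianReal_pi_prod_map_sum_mul_add {ι : Type*} [Fintype ι] (c : ι → ℝ) (s : ℝ≥0) :
    ((Measure.pi fun _ : ι => gaussianReal 0 1).prod (gaussianReal 0 s)).map
        (fun q => ∑ i, c i * q.1 i + q.2) =
      gaussianReal 0 ((∑ i, c i ^ 2).toNNReal + s) := by
  refine (map_prod_add_eq_conv (X := fun x : ι → ℝ => ∑ i, c i * x i) (Y := id)
    (by fun_prop) measurable_id).trans ?_
  rw [gaussianReal_pi_map_sum_mul, Measure.map_id, gaussianReal_conv_gaussianReal, zero_add]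

lemma gaussianReal_Ici_neg (v : ℝ≥0) (b : ℝ) :
    gaussianReal 0 v (Ici (-b)) = gaussianReal 0 v (Iic b) := by
  conv_lhs => rw [← neg_zero, ← gaussianReal_map_neg,
    Measure.map_apply measurable_neg measurableSet_Ici]
  simp

lemma gaussianReal_Iic_div_le_Ici_neg {τ : ℝ≥0} {b s : ℝ} (hb : 0 ≤ b) (hτs : √(τ : ℝ) ≤ s) :
    gaussianReal 0 1 (Iic (b / s)) ≤ gaussianReal 0 τ (Ici (-b)) := by
  have hτ : gaussianReal 0 τ = (gaussianReal 0 1).map (√(τ : ℝ) * ·) := by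
    rw [gaussianReal_map_const_mul, mul_zero]
    congr
    ext
    simp
  rw [gaussianReal_Ici_neg, hτ, Measure.map_apply (by fun_prop) measurableSet_Iic]
  refine measure_mono fun x (hx : x ≤ b / s) => ?_
  show √(τ : ℝ) * x ≤ b
  rcases le_or_gt x 0 with hx0 | hx0
  · exact (mul_nonpos_of_nonneg_of_nonpos (Real.sqrt_nonneg _) hx0).trans hb
  · have hs : 0 < s :=
      lt_of_not_ge fun hs => hx0.not_ge (hx.trans (div_nonpos_of_nonneg_of_nonpos hb hs))
    calc √(τ : ℝ) * x ≤ s * x := by gcongr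
      _ ≤ b := by rwa [← le_div_iff₀' hs]

lemma pi_gaussianReal_univ_pi_Ioi_ne_zero {ι : Type*} [Fintype ι] (m : ℝ) {v : ℝ≥0}
    (hv : v ≠ 0) (a : ℝ) :
    Measure.pi (fun _ : ι => gaussianReal m v) (univ.pi fun _ => Ioi a) ≠ 0 := by
  rw [Measure.pi_pi]
  exact Finset.prod_ne_zero_iff.2 fun _ _ =>
    mt (gaussianReal_absolutelyContinuous' m hv ·) (by simp)

lemma pi_prod_apply_restrict_mem_and {ι β : Type*} [Fintype ι]
    {α : ι → Type*} [∀ i, MeasurableSpace (α i)] [MeasurableSpace β]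
    (μ : ∀ i, Measure (α i)) [∀ i, SigmaFinite (μ i)] (ν : Measure β) [SigmaFinite ν]
    (p : ι → Prop) [DecidablePred p] {s : Set (∀ i : Subtype p, α i)}
    {t : Set ((∀ i : {i // ¬p i}, α i) × β)} (hs : MeasurableSet s) (ht : MeasurableSet t) :
    ((Measure.pi μ).prod ν) {q | (fun i : Subtype p => q.1 i) ∈ s ∧
        ((fun i : {i // ¬p i} => q.1 i), q.2) ∈ t} =
      Measure.pi (fun i : Subtype p => μ i) s *
        ((Measure.pi fun i : {i // ¬p i} => μ i).prod ν) t := by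
  have hsplit := (measurePreserving_prodAssoc _ _ _).comp
    ((measurePreserving_piEquivPiSubtypeProd μ p).prod (.id ν))
  rw [← Measure.prod_prod, ← hsplit.measure_preimage (hs.prod ht).nullMeasurableSet]
  rfl

lemma sqrt_sum_subtype_sq_add_sq_le {ι : Type*} [Fintype ι] (p : ι → Prop) [DecidablePred p]
    {v : ι → ℝ} {R : ℝ} (hR : √(∑ i, v i ^ 2) ≤ R) (σ : ℝ≥0) :
    √(((∑ j : Subtype p, v j ^ 2).toNNReal + σ ^ 2 : ℝ≥0) : ℝ) ≤ √(R ^ 2 + (σ : ℝ) ^ 2) := by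
  have hsub : ∑ j : Subtype p, v j ^ 2 ≤ ∑ i, v i ^ 2 := by
    rw [← Finset.sum_subtype (Finset.univ.filter p) (by simp) (fun j => v j ^ 2)]
    exact Finset.sum_le_univ_sum_of_nonneg fun _ => sq_nonneg _
  gcongr
  push_cast [Real.coe_toNNReal _ (Finset.sum_nonneg fun _ _ => sq_nonneg _)]
  linarith [(Real.sqrt_le_iff.1 hR).2]

lemma mul_le_sum_mul_of_forall_lt {ι : Type*} {C : Finset ι} {v x : ι → ℝ} {a δ : ℝ}
    (hv : ∀ i, 0 ≤ v i) (ha : 0 ≤ a) (hx : ∀ j ∈ C, a < x j) {i : ι} (hi : i ∈ C)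
    (hδ : δ ≤ v i) : a * δ ≤ ∑ j ∈ C, v j * x j :=
  calc a * δ ≤ v i * x i := by rw [mul_comm]; exact mul_le_mul hδ (hx i hi).le ha (hv i)
    _ ≤ ∑ j ∈ C, v j * x j :=
      Finset.single_le_sum (fun j hj => mul_nonneg (hv j) (ha.trans (hx j hj).le)) hi

lemma sum_mul_add_nonneg_of_forall_lt {ι : Type*} [Fintype ι] [DecidableEq ι] {C : Finset ι}
    {v x : ι → ℝ} {a δ z : ℝ} (hv : ∀ i, 0 ≤ v i) (ha : 0 ≤ a) (hx : ∀ j ∈ C, a < x j)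
    {i : ι} (hi : i ∈ C) (hδ : δ ≤ v i)
    (hrest : -(a * δ) ≤ ∑ j : {j // j ∉ C}, v j * x j + z) :
    0 ≤ ∑ j, v j * x j + z := by
  have hC := mul_le_sum_mul_of_forall_lt hv ha hx hi hδ
  rw [← Finset.sum_subtype Cᶜ (fun _ => Finset.mem_compl) (fun j => v j * x j)] at hrest
  linarith [Finset.sum_add_sum_compl C fun j => v j * x j]

theorem mlc_cond_prob_lower_bound_general (n : ℕ) (v : Fin n → ℝ) (δ R : ℝ)
    (hδ : 0 < δ) (hnonneg : ∀ i, 0 ≤ v i) (hmin : ∀ i, v i ≠ 0 → δ ≤ |v i|)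
    (hR : Real.sqrt (∑ i, (v i) ^ 2) ≤ R)
    (σ : NNReal)
    (a : ℝ) (ha : 0 < a) (C : Finset (Fin n)) (hC : ∃ i ∈ C, v i ≠ 0) :
    gaussianReal 0 1 (Set.Iic (a * δ / Real.sqrt (R ^ 2 + (σ : ℝ) ^ 2))) ≤
      ProbabilityTheory.cond
        ((Measure.pi fun _ : Fin n => gaussianReal 0 1).prod
          (gaussianReal 0 (σ ^ 2)))
        {p : (Fin n → ℝ) × ℝ | ∀ j ∈ C, a < p.1 j}
        {p : (Fin n → ℝ) × ℝ | 0 ≤ (∑ i, v i * p.1 i) + p.2} := by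
  obtain ⟨i, hiC, hvi⟩ := hC
  have hδi : δ ≤ v i := (abs_of_nonneg (hnonneg i)).symm ▸ hmin i hvi
  set A := {p : (Fin n → ℝ) × ℝ | ∀ j ∈ C, a < p.1 j}
  set E : Set ({j // j ∈ C} → ℝ) := univ.pi fun _ => Ioi a
  set W : ({j // j ∉ C} → ℝ) × ℝ → ℝ := fun q => ∑ j : {j // j ∉ C}, v j * q.1 j + q.2
  have hE : MeasurableSet E := .univ_pi fun _ => measurableSet_Ioi
  have hD : MeasurableSet (W ⁻¹' Ici (-(a * δ))) := (by fun_prop : Measurable W) measurableSet_Ici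
  have hμA := pi_prod_apply_restrict_mem_and (fun _ => gaussianReal 0 1) (gaussianReal 0 (σ ^ 2))
    (· ∈ C) hE .univ
  rw [measure_univ, mul_one, show {q : (Fin n → ℝ) × ℝ | _ ∧ _ ∈ univ} = A by ext; simp [A, E]]
    at hμA
  have hμAD := pi_prod_apply_restrict_mem_and (fun _ => gaussianReal 0 1) (gaussianReal 0 (σ ^ 2))
    (· ∈ C) hE hD
  have hΦ := gaussianReal_Iic_div_le_Ici_neg (mul_pos ha hδ).le
    (sqrt_sum_subtype_sq_add_sq_le (· ∉ C) hR σ)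
  rw [← gaussianReal_pi_prod_map_sum_mul_add, Measure.map_apply (by fun_prop) measurableSet_Ici]
    at hΦ
  have hA0 : ((Measure.pi fun _ => gaussianReal 0 1).prod (gaussianReal 0 (σ ^ 2))) A ≠ 0 :=
    -- `convert` reconciles the `Finset` and the `DecidablePred` instances of `Fintype ↥C`
    hμA ▸ by convert pi_gaussianReal_univ_pi_Ioi_ne_zero 0 one_ne_zero a
  rw [cond_apply' (measurableSet_le measurable_const (by fun_prop)), ← ENNReal.div_eq_inv_mul,
    ENNReal.le_div_iff_mul_le (.inl hA0) (.inl (measure_ne_top _ _)), hμA, mul_comm]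
  calc _ ≤ _ := by gcongr
    _ = _ := hμAD.symm
    _ ≤ _ := by
      refine measure_mono fun q ⟨hqE, hqW⟩ => ?_
      have hqA : q ∈ A := fun j hj => hqE ⟨j, hj⟩ (mem_univ _)
      exact ⟨hqA, sum_mul_add_nonneg_of_forall_lt hnonneg ha.le hqA hiC hδi hqW⟩

/-- MLC, single component intersecting `C`: let `v ∈ ℝⁿ` have non-negative
entries, every non-zero entry at least `δ > 0`, `‖v‖₂ ≤ R`, and `v_i ≠ 0` for
some `i ∈ C`.  Let the coordinates of `x` be i.i.d. standard Gaussians and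
`z ∼ N(0, σ²)` independent, with `R² + σ² > 0` and `a > 0`.  Then, conditioned
on `E_C = {x_j > a ∀ j ∈ C}`, the probability that `⟨v, x⟩ + z ≥ 0` is at least
`Φ(aδ/√(R² + σ²))`, where `Φ` is the standard Gaussian CDF. -/
theorem mlc_cond_prob_lower_bound (n : ℕ) (v : Fin n → ℝ) (δ R : ℝ)
    (hδ : 0 < δ) (hnonneg : ∀ i, 0 ≤ v i) (hmin : ∀ i, v i ≠ 0 → δ ≤ |v i|)
    (hR : Real.sqrt (∑ i, (v i) ^ 2) ≤ R)
    (σ : NNReal) (hRσ : 0 < R ^ 2 + (σ : ℝ) ^ 2)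
    (a : ℝ) (ha : 0 < a) (C : Finset (Fin n)) (hC : ∃ i ∈ C, v i ≠ 0) :
    gaussianReal 0 1 (Set.Iic (a * δ / Real.sqrt (R ^ 2 + (σ : ℝ) ^ 2))) ≤
      ProbabilityTheory.cond
        ((Measure.pi fun _ : Fin n => gaussianReal 0 1).prod
          (gaussianReal 0 (σ ^ 2)))
        {p : (Fin n → ℝ) × ℝ | ∀ j ∈ C, a < p.1 j}
        {p : (Fin n → ℝ) × ℝ | 0 ≤ (∑ i, v i * p.1 i) + p.2} :=
  mlc_cond_prob_lower_bound_general n v δ R hδ hnonneg hmin hR σ a ha C hC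
end

section
/- Let V = {v^{(1)},…,v^{(ℓ)}} be a multiset of ℓ vectors in ℝⁿ and σ ≥ 0. Let (x,y) be drawn from the MLR model: x₁,…,xₙ i.i.d. standard Gaussian N(0,1), v uniform from V, ζ ∼ N(0,σ²) independent, y = ⟨v,x⟩ + ζ. Then for every coordinate i ∈ [n], E[y² x_i²] = (1/ℓ) Σ_{v∈V} ( ‖v‖₂² + 2 v_i² ) + σ². In particular, if no vector in V has a non-zero i-th entry then E[y² x_i²] = (1/ℓ) Σ_{v∈V} ‖v‖₂² + σ², while if the magnitude of every non-zero entry of every vector in V is at least δ > 0 and some vector has a non-zero i-th entry, then E[y² x_i²] ≥ (1/ℓ) Σ_{v∈V} ‖v‖₂² + σ² + 2δ²/ℓ. -/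
open MeasureTheory ProbabilityTheory

/-- The MLR sample distribution `P_r` on pairs `(x, y)`: the coordinates of `x`
are i.i.d. standard Gaussian, `v` is drawn uniformly from the multiset
`V = {v⁽¹⁾, …, v⁽ℓ⁾}`, `ζ ∼ N(0, σ²)` independently, and `y = ⟨v, x⟩ + ζ`. -/
noncomputable def mlrMeasure (n ℓ : ℕ) (v : Fin ℓ → Fin n → ℝ) (σ : NNReal) :
    Measure ((Fin n → ℝ) × ℝ) :=
  (ℓ : ENNReal)⁻¹ • ∑ j : Fin ℓ,
    Measure.map (fun p : (Fin n → ℝ) × ℝ => (p.1, (∑ i, v j i * p.1 i) + p.2))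
      ((Measure.pi fun _ : Fin n => gaussianReal 0 1).prod (gaussianReal 0 (σ ^ 2)))

open Real
open scoped NNReal

/-!
Given the component `w` drawn from `V`, the response is `y = ⟨w, x⟩ + ζ` with `ζ ∼ N(0, σ²)`
independent of `x`, so `E[y² x_i²] = E[⟨w, x⟩² x_i²] + σ² E[x_i²]`. Expanding
`⟨w, x⟩² x_i² = ∑_{k,l} w_k w_l x_k x_l x_i²`, independence of the coordinates factors every
mixed moment into one-dimensional Gaussian moments: `E[x_k x_l x_i²]` vanishes for `k ≠ l`
(an odd moment appears), and equals `E[x²]² = 1` for `k = l ≠ i` and `E[x⁴] = 3` for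
`k = l = i`. These moments come from the recursion `E[x^(k+2)] = (k + 1) v E[x^k]` for
`N(0, v)`, which is integration by parts against the density. Averaging over the `ℓ`
components gives the formula, and the two special cases are read off from it.
-/

lemma integrable_gaussianReal_iff {μ : ℝ} {v : ℝ≥0} (hv : v ≠ 0) {f : ℝ → ℝ} :
    Integrable f (gaussianReal μ v) ↔ Integrable (fun x => gaussianPDFReal μ v x * f x) := by
  rw [gaussianReal_of_var_ne_zero μ hv, integrable_withDensity_iff_integrable_smul'
    (measurable_gaussianPDF μ v) (ae_of_all _ fun _ => gaussianPDF_lt_top)]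
  simp [gaussianPDF, ENNReal.toReal_ofReal (gaussianPDFReal_nonneg μ v _)]

lemma integrable_pow_gaussianReal (μ : ℝ) (v : ℝ≥0) (k : ℕ) :
    Integrable (fun x : ℝ => x ^ k) (gaussianReal μ v) :=
  integrable_pow_of_mem_interior_integrableExpSet (X := fun x => x) (by simp) k

lemma hasDerivAt_gaussianPDFReal (μ : ℝ) (v : ℝ≥0) (x : ℝ) :
    HasDerivAt (gaussianPDFReal μ v) (-((x - μ) / v) * gaussianPDFReal μ v x) x := by
  have h : HasDerivAt (fun x : ℝ => -(x - μ) ^ 2 / (2 * v)) (-((x - μ) / v)) x := by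
    refine ((((hasDerivAt_id x).sub_const μ).pow 2).neg.div_const (2 * (v : ℝ))).congr_deriv ?_
    simp only [id]; ring
  refine (h.exp.const_mul (√(2 * π * v))⁻¹).congr_deriv ?_
  simp only [gaussianPDFReal]; ring

lemma integral_pow_add_two_gaussianReal (v : ℝ≥0) (k : ℕ) :
    ∫ x, x ^ (k + 2) ∂gaussianReal 0 v = (k + 1) * v * ∫ x, x ^ k ∂gaussianReal 0 v := by
  rcases eq_or_ne v 0 with rfl | hv
  · simp [gaussianReal_zero_var]
  have hint (j : ℕ) : Integrable (fun x => gaussianPDFReal 0 v x * x ^ j) :=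
    (integrable_gaussianReal_iff hv).1 (integrable_pow_gaussianReal 0 v j)
  simp only [integral_gaussianReal_eq_integral_smul hv, smul_eq_mul]
  -- integration by parts against `(-v p)' = x p`, where `p` is the density
  have key := integral_mul_deriv_eq_deriv_mul_of_integrable
    (u := fun x => x ^ (k + 1)) (u' := fun x => (k + 1 : ℝ) * x ^ k)
    (v := fun x => -(v : ℝ) * gaussianPDFReal 0 v x) (v' := fun x => gaussianPDFReal 0 v x * x)
    (fun x _ => by simpa using hasDerivAt_pow (k + 1) x)
    (fun x _ => by
      convert (hasDerivAt_gaussianPDFReal 0 v x).const_mul (-(v : ℝ)) using 1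
      simp only [sub_zero]; field_simp)
    (by convert hint (k + 2) using 2; simp only [Pi.mul_apply]; ring)
    (by convert (hint k).const_mul (-((k + 1 : ℝ) * v)) using 2; simp only [Pi.mul_apply]; ring)
    (by convert (hint (k + 1)).const_mul (-(v : ℝ)) using 2; simp only [Pi.mul_apply]; ring)
  calc ∫ x, gaussianPDFReal 0 v x * x ^ (k + 2)
      = ∫ x, x ^ (k + 1) * (gaussianPDFReal 0 v x * x) := by congr 1; ext x; ring
    _ = (k + 1) * v * ∫ x, gaussianPDFReal 0 v x * x ^ k := by
      rw [key, ← integral_const_mul, ← integral_neg]; congr 1; ext x; ring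

lemma integral_pow_of_odd_gaussianReal (v : ℝ≥0) {k : ℕ} (hk : Odd k) :
    ∫ x, x ^ k ∂gaussianReal 0 v = 0 := by
  have h : ∫ x, x ^ k ∂gaussianReal 0 v = -∫ x, x ^ k ∂gaussianReal 0 v := by
    conv_lhs => rw [← neg_zero, ← gaussianReal_map_neg, integral_map (by fun_prop) (by fun_prop)]
    simp only [hk.neg_pow, integral_neg]
  linarith

lemma integral_sq_gaussianReal (v : ℝ≥0) : ∫ x, x ^ 2 ∂gaussianReal 0 v = v := by
  simpa using integral_pow_add_two_gaussianReal v 0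

lemma integral_pow_four_gaussianReal (v : ℝ≥0) :
    ∫ x, x ^ 4 ∂gaussianReal 0 v = 3 * v ^ 2 := by
  rw [integral_pow_add_two_gaussianReal v 2, integral_sq_gaussianReal]; norm_num; ring

section GaussianNoise

variable {α : Type*} [MeasurableSpace α] {μ : Measure α} (v : ℝ≥0) {S g : α → ℝ}

-- Every summand has the product form `f x * h t` used by `Integrable.mul_prod` and
-- `integral_prod_mul`.
lemma add_sq_mul_eq (s t c : ℝ) :
    (s + t) ^ 2 * c = s ^ 2 * c * 1 + 2 * (s * c) * t + c * t ^ 2 := by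
  ring

lemma integrable_add_sq_mul_prod_gaussianReal (hS2g : Integrable (fun x => S x ^ 2 * g x) μ)
    (hSg : Integrable (fun x => S x * g x) μ) (hg : Integrable g μ) :
    Integrable (fun p : α × ℝ => (S p.1 + p.2) ^ 2 * g p.1) (μ.prod (gaussianReal 0 v)) := by
  simp_rw [add_sq_mul_eq]
  exact ((hS2g.mul_prod (integrable_const 1)).add ((hSg.const_mul 2).mul_prod
    (by simpa using integrable_pow_gaussianReal 0 v 1))).add
    (hg.mul_prod (integrable_pow_gaussianReal 0 v 2))

lemma integral_add_sq_mul_prod_gaussianReal [SFinite μ]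
    (hS2g : Integrable (fun x => S x ^ 2 * g x) μ)
    (hSg : Integrable (fun x => S x * g x) μ) (hg : Integrable g μ) :
    ∫ p : α × ℝ, (S p.1 + p.2) ^ 2 * g p.1 ∂(μ.prod (gaussianReal 0 v))
      = ∫ x, S x ^ 2 * g x ∂μ + v * ∫ x, g x ∂μ := by
  have i2 := hS2g.mul_prod (integrable_const (1 : ℝ)) (ν := gaussianReal 0 v)
  have i1 := (hSg.const_mul 2).mul_prod (by simpa using integrable_pow_gaussianReal 0 v 1)
  have i0 := hg.mul_prod (integrable_pow_gaussianReal 0 v 2)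
  simp_rw [add_sq_mul_eq]
  rw [integral_add ?_ i0, integral_add i2 i1,
    integral_prod_mul (fun x => S x ^ 2 * g x) (fun _ => (1 : ℝ)),
    integral_prod_mul (fun x => 2 * (S x * g x)) (fun t => t), integral_prod_mul g (fun t => t ^ 2),
    integral_id_gaussianReal, integral_sq_gaussianReal]
  · simp only [integral_const, probReal_univ, smul_eq_mul, mul_one, mul_zero, add_zero]
    ring
  · exact i2.add i1

end GaussianNoise

section Monomials

variable {ι M : Type*} [Fintype ι] [DecidableEq ι] [CommMonoid M]

lemma prod_pow_single (x : ι → M) (k : ι) (d : ℕ) :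
    ∏ m, x m ^ (Pi.single k d : ι → ℕ) m = x k ^ d := by
  simp [Pi.single_apply, pow_ite]

lemma pow_mul_pow_mul_pow_eq_prod (x : ι → M) (k l i : ι) (a b c : ℕ) :
    x k ^ a * x l ^ b * x i ^ c
      = ∏ m, x m ^ (Pi.single k a + Pi.single l b + Pi.single i c : ι → ℕ) m := by
  simp only [Pi.add_apply, pow_add, Finset.prod_mul_distrib, prod_pow_single]

end Monomials

lemma sq_sum_mul_sq_eq {ι R : Type*} [Fintype ι] [CommSemiring R] (w x : ι → R) (i : ι) :
    (∑ k, w k * x k) ^ 2 * x i ^ 2 = ∑ k, ∑ l, w k * w l * (x k * x l * x i ^ 2) := by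
  simp_rw [sq, Finset.sum_mul_sum, Finset.sum_mul]
  exact Finset.sum_congr rfl fun k _ => Finset.sum_congr rfl fun l _ => by ring

section StandardGaussianVector

variable {ι : Type*} [Fintype ι]

local notation "γ" => Measure.pi fun _ : ι => gaussianReal 0 1

lemma integrable_prod_pow_stdGaussian (e : ι → ℕ) :
    Integrable (fun x : ι → ℝ => ∏ m, x m ^ e m) γ :=
  Integrable.fintype_prod fun m => integrable_pow_gaussianReal 0 1 (e m)

lemma integral_prod_pow_stdGaussian (e : ι → ℕ) :
    ∫ x : ι → ℝ, ∏ m, x m ^ e m ∂γ = ∏ m, ∫ t, t ^ e m ∂gaussianReal 0 1 :=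
  integral_fintype_prod_eq_prod _

lemma integrable_sq_stdGaussian (i : ι) : Integrable (fun x : ι → ℝ => x i ^ 2) γ :=
  integrable_comp_eval (μ := fun _ : ι => gaussianReal 0 1) (i := i) (f := fun t : ℝ => t ^ 2)
    (integrable_pow_gaussianReal 0 1 2)

lemma integral_sq_stdGaussian (i : ι) : ∫ x : ι → ℝ, x i ^ 2 ∂γ = 1 := by
  rw [integral_comp_eval (X := fun _ : ι => ℝ) (f := fun t => t ^ 2) (by fun_prop),
    integral_sq_gaussianReal, NNReal.coe_one]

variable [DecidableEq ι]

lemma integrable_pow_mul_pow_mul_pow_stdGaussian (k l i : ι) (a b c : ℕ) :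
    Integrable (fun x : ι → ℝ => x k ^ a * x l ^ b * x i ^ c) γ := by
  simp_rw [pow_mul_pow_mul_pow_eq_prod]
  exact integrable_prod_pow_stdGaussian _

lemma integral_mul_mul_sq_stdGaussian (k l i : ι) :
    ∫ x : ι → ℝ, x k * x l * x i ^ 2 ∂γ = if k = l then (if k = i then 3 else 1) else 0 := by
  have hmon (x : ι → ℝ) := by simpa only [pow_one] using pow_mul_pow_mul_pow_eq_prod x k l i 1 1 2
  simp_rw [hmon]
  rw [integral_prod_pow_stdGaussian]
  by_cases hkl : k = l
  · subst hkl
    by_cases hki : k = i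
    · subst hki
      rw [Finset.prod_eq_single k (fun m _ hm => by simp [hm]) (by simp)]
      simp only [Pi.add_apply, Pi.single_eq_same, Nat.reduceAdd, integral_pow_four_gaussianReal]
      norm_num
    · rw [Finset.prod_eq_mul k i hki (fun m _ hm => by simp [hm]) (by simp) (by simp)]
      simp [hki, Ne.symm hki, integral_sq_gaussianReal]
  · rw [if_neg hkl]
    refine Finset.prod_eq_zero (Finset.mem_univ k) (integral_pow_of_odd_gaussianReal 1 ?_)
    simp only [Pi.add_apply, Pi.single_apply, if_pos, if_neg hkl]
    split_ifs <;> decide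

lemma integrable_sum_mul_sq_stdGaussian (w : ι → ℝ) (i : ι) :
    Integrable (fun x : ι → ℝ => (∑ k, w k * x k) * x i ^ 2) γ := by
  simp_rw [Finset.sum_mul, mul_assoc]
  exact integrable_finsetSum _ fun k _ => by
    simpa using (integrable_pow_mul_pow_mul_pow_stdGaussian k k i 1 0 2).const_mul (w k)

lemma integrable_sq_sum_mul_sq_stdGaussian (w : ι → ℝ) (i : ι) :
    Integrable (fun x : ι → ℝ => (∑ k, w k * x k) ^ 2 * x i ^ 2) γ := by
  simp_rw [sq_sum_mul_sq_eq]
  exact integrable_finsetSum _ fun k _ => integrable_finsetSum _ fun l _ => by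
    simpa using (integrable_pow_mul_pow_mul_pow_stdGaussian k l i 1 1 2).const_mul (w k * w l)

lemma integral_sq_sum_mul_sq_stdGaussian (w : ι → ℝ) (i : ι) :
    ∫ x : ι → ℝ, (∑ k, w k * x k) ^ 2 * x i ^ 2 ∂γ = ∑ k, w k ^ 2 + 2 * w i ^ 2 := by
  have hint (k l : ι) : Integrable (fun x : ι → ℝ => w k * w l * (x k * x l * x i ^ 2)) γ := by
    simpa using (integrable_pow_mul_pow_mul_pow_stdGaussian k l i 1 1 2).const_mul (w k * w l)
  simp_rw [sq_sum_mul_sq_eq]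
  rw [integral_finsetSum _ fun k _ => integrable_finsetSum _ fun l _ => hint k l]
  simp_rw [integral_finsetSum _ fun l _ => hint _ l, integral_const_mul,
    integral_mul_mul_sq_stdGaussian, mul_ite, mul_zero, Finset.sum_ite_eq, Finset.mem_univ, if_true]
  calc ∑ k, (if k = i then w k * w k * 3 else w k * w k * 1)
      = ∑ k, (w k ^ 2 + if k = i then 2 * w k ^ 2 else 0) :=
        Finset.sum_congr rfl fun k _ => by split_ifs <;> ring
    _ = ∑ k, w k ^ 2 + 2 * w i ^ 2 := by
      rw [Finset.sum_add_distrib, Finset.sum_ite_eq' Finset.univ i, if_pos (Finset.mem_univ i)]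

lemma integrable_sq_add_noise_mul_sq (w : ι → ℝ) (σ : ℝ≥0) (i : ι) :
    Integrable (fun p : (ι → ℝ) × ℝ => (∑ k, w k * p.1 k + p.2) ^ 2 * p.1 i ^ 2)
      (Measure.prod γ (gaussianReal 0 (σ ^ 2))) :=
  integrable_add_sq_mul_prod_gaussianReal _ (integrable_sq_sum_mul_sq_stdGaussian w i)
    (integrable_sum_mul_sq_stdGaussian w i) (integrable_sq_stdGaussian i)

lemma integral_sq_add_noise_mul_sq (w : ι → ℝ) (σ : ℝ≥0) (i : ι) :
    ∫ p : (ι → ℝ) × ℝ, (∑ k, w k * p.1 k + p.2) ^ 2 * p.1 i ^ 2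
        ∂(Measure.prod γ (gaussianReal 0 (σ ^ 2))) = ∑ k, w k ^ 2 + 2 * w i ^ 2 + σ ^ 2 := by
  rw [integral_add_sq_mul_prod_gaussianReal _ (integrable_sq_sum_mul_sq_stdGaussian w i)
    (integrable_sum_mul_sq_stdGaussian w i) (integrable_sq_stdGaussian i),
    integral_sq_sum_mul_sq_stdGaussian, integral_sq_stdGaussian]
  push_cast; ring

end StandardGaussianVector

lemma integral_mlrMeasure {n ℓ : ℕ} (v : Fin ℓ → Fin n → ℝ) (σ : ℝ≥0)
    {f : (Fin n → ℝ) × ℝ → ℝ} (hf : Measurable f)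
    (hint : ∀ j, Integrable (fun p : (Fin n → ℝ) × ℝ => f (p.1, ∑ k, v j k * p.1 k + p.2))
      ((Measure.pi fun _ : Fin n => gaussianReal 0 1).prod (gaussianReal 0 (σ ^ 2)))) :
    ∫ p, f p ∂mlrMeasure n ℓ v σ = (ℓ : ℝ)⁻¹ * ∑ j, ∫ p : (Fin n → ℝ) × ℝ,
      f (p.1, ∑ k, v j k * p.1 k + p.2)
        ∂((Measure.pi fun _ : Fin n => gaussianReal 0 1).prod (gaussianReal 0 (σ ^ 2))) := by
  have hT (j : Fin ℓ) : Measurable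
      fun p : (Fin n → ℝ) × ℝ => (p.1, ∑ k, v j k * p.1 k + p.2) := by fun_prop
  rw [mlrMeasure, integral_smul_measure, integral_finsetSum_measure fun j _ => ?_]
  · simp_rw [integral_map (hT _).aemeasurable hf.aestronglyMeasurable]
    simp
  · rw [integrable_map_measure hf.aestronglyMeasurable (hT j).aemeasurable]
    exact hint j

/-- For `(x, y) ∼ P_r` and every coordinate `i`,
`E[y² x_i²] = (1/ℓ) Σ_{v∈V} (‖v‖₂² + 2 v_i²) + σ²`.  In particular, if no
vector of `V` has a non-zero `i`-th entry then `E[y² x_i²] = (1/ℓ) Σ_v ‖v‖₂² + σ²`,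
while if every non-zero entry of every vector is at least `δ > 0` in magnitude
and some vector has a non-zero `i`-th entry, then
`E[y² x_i²] ≥ (1/ℓ) Σ_v ‖v‖₂² + σ² + 2δ²/ℓ`. -/
theorem mlr_second_moment_coordinate (n ℓ : ℕ) (hℓ : 0 < ℓ)
    (v : Fin ℓ → Fin n → ℝ) (σ : NNReal) (i : Fin n) :
    (∫ p : (Fin n → ℝ) × ℝ, p.2 ^ 2 * (p.1 i) ^ 2 ∂(mlrMeasure n ℓ v σ))
        = (1 / ℓ : ℝ) * (∑ j : Fin ℓ, ((∑ k, (v j k) ^ 2) + 2 * (v j i) ^ 2))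
          + (σ : ℝ) ^ 2
    ∧ ((∀ j, v j i = 0) →
        (∫ p : (Fin n → ℝ) × ℝ, p.2 ^ 2 * (p.1 i) ^ 2 ∂(mlrMeasure n ℓ v σ))
          = (1 / ℓ : ℝ) * (∑ j : Fin ℓ, ∑ k, (v j k) ^ 2) + (σ : ℝ) ^ 2)
    ∧ (∀ δ : ℝ, 0 < δ → (∀ j k, v j k ≠ 0 → δ ≤ |v j k|) → (∃ j, v j i ≠ 0) →
        (1 / ℓ : ℝ) * (∑ j : Fin ℓ, ∑ k, (v j k) ^ 2) + (σ : ℝ) ^ 2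
            + 2 * δ ^ 2 / ℓ
          ≤ ∫ p : (Fin n → ℝ) × ℝ, p.2 ^ 2 * (p.1 i) ^ 2 ∂(mlrMeasure n ℓ v σ)) := by
  have hmain : ∫ p : (Fin n → ℝ) × ℝ, p.2 ^ 2 * (p.1 i) ^ 2 ∂(mlrMeasure n ℓ v σ)
      = (1 / ℓ : ℝ) * (∑ j : Fin ℓ, ((∑ k, (v j k) ^ 2) + 2 * (v j i) ^ 2)) + (σ : ℝ) ^ 2 := by
    rw [integral_mlrMeasure v σ (by fun_prop) fun j => integrable_sq_add_noise_mul_sq (v j) σ i]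
    simp_rw [integral_sq_add_noise_mul_sq, Finset.sum_add_distrib (g := fun _ => (σ : ℝ) ^ 2)]
    simp only [Finset.sum_const, Finset.card_univ, Fintype.card_fin, nsmul_eq_mul]
    field_simp
  refine ⟨hmain, fun hzero => by simp [hmain, hzero], fun δ hδ hmin ⟨j₀, hj₀⟩ => ?_⟩
  have hδ_le : δ ^ 2 ≤ ∑ j, v j i ^ 2 := calc
    δ ^ 2 ≤ v j₀ i ^ 2 := sq_abs (v j₀ i) ▸ pow_le_pow_left₀ hδ.le (hmin j₀ i hj₀) 2
    _ ≤ ∑ j, v j i ^ 2 := Finset.single_le_sum (fun j _ => sq_nonneg (v j i)) (Finset.mem_univ j₀)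
  calc (1 / ℓ : ℝ) * (∑ j : Fin ℓ, ∑ k, (v j k) ^ 2) + (σ : ℝ) ^ 2 + 2 * δ ^ 2 / ℓ
      ≤ (1 / ℓ : ℝ) * (∑ j : Fin ℓ, ∑ k, (v j k) ^ 2) + (σ : ℝ) ^ 2
          + 2 * (∑ j, v j i ^ 2) / ℓ := by gcongr
    _ = _ := by rw [hmain, Finset.sum_add_distrib, ← Finset.mul_sum]; ring
end
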